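/- Let α ∈ Φ and let α_i ≠ α_j be two distinct simple roots. Assume α + α_i − α_j ∈ Φ. If α − α_j ∈ Φ and α ≠ −α_i, then α + α_i ∈ Φ. -/

import Mathlib

noncomputable section

variable {E : Type*} [AddCommGroup E] [Module ℚ E]

/-- The Cartan pairing `(β, α^∨) = 2(β,α)/(α,α)`. -/
def pairingB (B : E →ₗ[ℚ] E →ₗ[ℚ] ℚ) (β α : E) : ℚ := 2 * B β α / B α α

/-- A reduced crystallographic root system in a ℚ-vector space with a
positive-definite symmetric bilinear form. -/
structure IsRootSystem (B : E →ₗ[ℚ] E →ₗ[ℚ] ℚ) (Φ : Set E) : Prop where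
  finite : Φ.Finite
  ne_zero : ∀ α ∈ Φ, α ≠ 0
  symm : ∀ x y : E, B x y = B y x
  posdef : ∀ x : E, x ≠ 0 → 0 < B x x
  reduced : ∀ α ∈ Φ, ∀ t : ℚ, t • α ∈ Φ → t = 1 ∨ t = -1
  cryst : ∀ α ∈ Φ, ∀ β ∈ Φ, ∃ n : ℤ, pairingB B β α = n
  reflMem : ∀ α ∈ Φ, ∀ β ∈ Φ, β - pairingB B β α • α ∈ Φ

/-- Irreducibility: no nontrivial orthogonal decomposition of `Φ`. -/
def IsIrreducibleRS (B : E →ₗ[ℚ] E →ₗ[ℚ] ℚ) (Φ : Set E) : Prop :=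
  ∀ s : Set E, s ⊆ Φ → s.Nonempty →
    (∀ α ∈ s, ∀ β ∈ Φ, β ∉ s → B α β = 0) → Φ ⊆ s

/-- `RootChain Φ γ β p q` says that the `γ`-string through `β` is
`β - qγ, ..., β, ..., β + pγ`. -/
def RootChain (Φ : Set E) (γ β : E) (p q : ℕ) : Prop :=
  (∀ k : ℤ, -(q : ℤ) ≤ k → k ≤ (p : ℤ) → β + (k : ℚ) • γ ∈ Φ) ∧
  β - ((q : ℚ) + 1) • γ ∉ Φ ∧ β + ((p : ℚ) + 1) • γ ∉ Φ

/-- A set of simple roots `α_i = a i`, indexed by a finite set `I`. -/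
structure IsBase {I : Type*} [Fintype I] (Φ : Set E) (a : I → E) : Prop where
  mem : ∀ i, a i ∈ Φ
  indep : LinearIndependent ℚ a
  posneg : ∀ β ∈ Φ, (∃ c : I → ℕ, β = ∑ i, (c i : ℚ) • a i) ∨
    (∃ c : I → ℕ, β = -∑ i, (c i : ℚ) • a i)

/-!
Suppose `α + α_i ∉ Φ`. Since `α + α_i ≠ 0`, the sum rule for roots forces `(α, α_i) ≥ 0`, and
likewise `(γ, α_j) ≥ 0` for `γ = α + α_i - α_j`, because `γ + α_j = α + α_i`. As `(α_i, α_j) ≤ 0`,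
this gives `(α_j, α_j) ≤ (α, α_j)`, and strict Cauchy–Schwarz (`α ≠ ±α_j` since `α - α_j ∈ Φ`)
yields `(α, α_j) < (α, α)`. Hence `(γ, α) = (α, α) - (α, α_j) + (α_i, α) > 0`, so
`γ - α = α_i - α_j` is a root, which is impossible for distinct simple roots.
-/

namespace IsRootSystem

variable {B : E →ₗ[ℚ] E →ₗ[ℚ] ℚ} {Φ : Set E}

lemma pairingB_self (hRS : IsRootSystem B Φ) {δ : E} (hδ : δ ∈ Φ) : pairingB B δ δ = 2 := by
  have := (hRS.posdef δ (hRS.ne_zero δ hδ)).ne'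
  unfold pairingB
  field_simp

lemma neg_mem (hRS : IsRootSystem B Φ) {δ : E} (hδ : δ ∈ Φ) : -δ ∈ Φ := by
  have h := hRS.reflMem δ hδ δ hδ
  rwa [hRS.pairingB_self hδ, two_smul, sub_add_cancel_left] at h

lemma add_mem_of_pairingB_eq_neg_one (hRS : IsRootSystem B Φ) {β δ : E} (hβ : β ∈ Φ)
    (hδ : δ ∈ Φ) (h : pairingB B β δ = -1) : β + δ ∈ Φ := by
  have := hRS.reflMem δ hδ β hβ
  rwa [h, neg_smul, one_smul, sub_neg_eq_add] at this

lemma linearIndependent_pair (hRS : IsRootSystem B Φ) {β δ : E} (hβ : β ∈ Φ) (hδ : δ ∈ Φ)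
    (h₁ : β ≠ δ) (h₂ : β ≠ -δ) : LinearIndependent ℚ ![δ, β] := by
  rw [LinearIndependent.pair_iff' (hRS.ne_zero δ hδ)]
  rintro t rfl
  rcases hRS.reduced δ hδ t hβ with rfl | rfl
  · exact h₁ (one_smul ℚ δ)
  · exact h₂ (by rw [neg_smul, one_smul])

lemma apply_mul_apply_lt (hRS : IsRootSystem B Φ) {β δ : E} (hβ : β ∈ Φ) (hδ : δ ∈ Φ)
    (h₁ : β ≠ δ) (h₂ : β ≠ -δ) : B β δ * B β δ < B β β * B δ δ := by
  have := (LinearMap.BilinForm.apply_mul_apply_lt_iff_linearIndependent B hRS.posdef δ β).2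
    (hRS.linearIndependent_pair hβ hδ h₁ h₂)
  rwa [hRS.symm δ β, mul_comm (B δ δ)] at this

lemma apply_lt_apply_self_of_apply_self_le (hRS : IsRootSystem B Φ) {α δ : E} (hα : α ∈ Φ)
    (hδ : δ ∈ Φ) (hsub : α - δ ∈ Φ) (hle : B δ δ ≤ B α δ) : B α δ < B α α := by
  have hδδ := hRS.posdef δ (hRS.ne_zero δ hδ)
  have hne : α ≠ δ := fun h => hRS.ne_zero _ hsub (by rw [h, sub_self])
  have hne_neg : α ≠ -δ := by
    rintro rfl
    simp only [map_neg, LinearMap.neg_apply] at hle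
    linarith
  nlinarith [hRS.apply_mul_apply_lt hα hδ hne hne_neg]

lemma add_mem_of_apply_neg (hRS : IsRootSystem B Φ) {β δ : E} (hβ : β ∈ Φ) (hδ : δ ∈ Φ)
    (hneg : B β δ < 0) (hne : β + δ ≠ 0) : β + δ ∈ Φ := by
  have hββ := hRS.posdef β (hRS.ne_zero β hβ)
  have hδδ := hRS.posdef δ (hRS.ne_zero δ hδ)
  have hβδ : β ≠ δ := by rintro rfl; linarith
  have hcs := hRS.apply_mul_apply_lt hβ hδ hβδ (fun h => hne (by rw [h, neg_add_cancel]))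
  obtain ⟨m, hm⟩ := hRS.cryst δ hδ β hβ
  obtain ⟨n, hn⟩ := hRS.cryst β hβ δ hδ
  have hm_neg : (m : ℚ) < 0 := hm ▸ div_neg_of_neg_of_pos (by linarith) hδδ
  have hn_neg : (n : ℚ) < 0 := hn ▸ div_neg_of_neg_of_pos (by rw [hRS.symm]; linarith) hββ
  -- the product of the two Cartan integers is `4 cos² θ < 4`
  have hmn : (m : ℚ) * n < 4 := by
    rw [← hm, ← hn, pairingB, pairingB, hRS.symm δ β, div_mul_div_comm,
      div_lt_iff₀ (by positivity)]
    nlinarith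
  have hm_neg' : m < 0 := by exact_mod_cast hm_neg
  have hn_neg' : n < 0 := by exact_mod_cast hn_neg
  have hmn' : m * n < 4 := by exact_mod_cast hmn
  have hmn_one : m = -1 ∨ n = -1 := by
    by_contra! h
    nlinarith [show m ≤ -2 by omega, show n ≤ -2 by omega]
  rcases hmn_one with h | h
  · exact hRS.add_mem_of_pairingB_eq_neg_one hβ hδ (by rw [hm, h]; norm_num)
  · rw [add_comm]
    exact hRS.add_mem_of_pairingB_eq_neg_one hδ hβ (by rw [hn, h]; norm_num)

lemma sub_mem_of_apply_pos (hRS : IsRootSystem B Φ) {β δ : E} (hβ : β ∈ Φ) (hδ : δ ∈ Φ)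
    (hpos : 0 < B β δ) (hne : β ≠ δ) : β - δ ∈ Φ := by
  rw [sub_eq_add_neg]
  exact hRS.add_mem_of_apply_neg hβ (hRS.neg_mem hδ) (by simpa using hpos)
    (by rwa [← sub_eq_add_neg, sub_ne_zero])

end IsRootSystem

lemma LinearIndependent.add_sum_natCast_smul_ne {I : Type*} [Fintype I] {a : I → E}
    (hind : LinearIndependent ℚ a) {i j : I} (hij : i ≠ j) (c : I → ℕ) :
    a i + ∑ k, (c k : ℚ) • a k ≠ a j := by
  classical
  intro h
  have := Fintype.linearIndependent_iffₛ.1 hind (Pi.single i 1 + fun k => (c k : ℚ))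
    (Pi.single j 1) (by simpa [add_smul, Finset.sum_add_distrib, Pi.single_apply]) i
  simp only [Pi.add_apply, Pi.single_eq_same, ne_eq, hij, not_false_eq_true, Pi.single_eq_of_ne] at this
  linarith [(c i).cast_nonneg (α := ℚ)]

namespace IsBase

variable {I : Type*} [Fintype I] {Φ : Set E} {a : I → E}

lemma sub_notMem (hbase : IsBase Φ a) {i j : I} (hij : i ≠ j) : a i - a j ∉ Φ := by
  intro hmem
  rcases hbase.posneg _ hmem with ⟨c, hc⟩ | ⟨c, hc⟩
  · exact hbase.indep.add_sum_natCast_smul_ne hij.symm c (by rw [← hc]; abel)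
  · exact hbase.indep.add_sum_natCast_smul_ne hij c (by rw [← neg_neg (∑ k, _), ← hc]; abel)

lemma apply_nonpos {B : E →ₗ[ℚ] E →ₗ[ℚ] ℚ} (hRS : IsRootSystem B Φ) (hbase : IsBase Φ a)
    {i j : I} (hij : i ≠ j) : B (a i) (a j) ≤ 0 :=
  not_lt.1 fun h => hbase.sub_notMem hij <| hRS.sub_mem_of_apply_pos (hbase.mem i) (hbase.mem j) h
    fun he => hij (hbase.indep.injective he)

end IsBase

theorem add_simple_mem
    {I : Type*} [Fintype I]
    (B : E →ₗ[ℚ] E →ₗ[ℚ] ℚ) (Φ : Set E) (hRS : IsRootSystem B Φ)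
    (a : I → E) (hbase : IsBase Φ a) {i j : I} (hij : i ≠ j)
    {α : E} (hα : α ∈ Φ) (h1 : α + a i - a j ∈ Φ)
    (h2 : α - a j ∈ Φ) (h3 : α ≠ -a i) :
    α + a i ∈ Φ := by
  by_contra hne
  have hai := hbase.mem i
  have haj := hbase.mem j
  have hsum : α + a i ≠ 0 := fun h => h3 (eq_neg_of_add_eq_zero_left h)
  have hαi : 0 ≤ B α (a i) :=
    not_lt.1 fun h => hne (hRS.add_mem_of_apply_neg hα hai h hsum)
  have hγj : 0 ≤ B (α + a i - a j) (a j) := not_lt.1 fun h => hne <| by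
    simpa using hRS.add_mem_of_apply_neg h1 haj h (by rwa [sub_add_cancel])
  have hαj : B (a j) (a j) ≤ B α (a j) := by
    have := hbase.apply_nonpos hRS hij
    simp only [map_add, map_sub, LinearMap.add_apply, LinearMap.sub_apply] at hγj
    linarith
  have hlt := hRS.apply_lt_apply_self_of_apply_self_le hα haj h2 hαj
  have hγα : 0 < B (α + a i - a j) α := by
    simp only [map_add, map_sub, LinearMap.add_apply, LinearMap.sub_apply, hRS.symm (a i),
      hRS.symm (a j)]
    linarith
  have hγ_ne : α + a i - a j ≠ α := fun h =>
    hij (hbase.indep.injective (by rwa [add_sub_assoc, add_eq_left, sub_eq_zero] at h))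
  have := hRS.sub_mem_of_apply_pos h1 hα hγα hγ_ne
  exact hbase.sub_notMem hij (by rwa [add_sub_assoc, add_sub_cancel_left] at this)
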